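/- arXiv:2211.08827 — 5 statements merged into one kernel-verified Lean document; each statement's English description precedes it below -/
import Mathlib

section
/- Under the hypotheses of the previous statement (x_d' = f_d + Σᵢ ηᵢQᵢx_d with Qᵢ symmetric, QᵢQⱼ = 0 for i ≠ j, Qᵢ² = kQᵢ), assume additionally that k ≠ 0 and that Ψ_j(t) = x_d(t)ᵀQ_j x_d(t) > 0 for all t. Define ξ_j(t) = ln Ψ_j(t) and β_j(t) = α_j(t)/Ψ_j(t) where α_j(t) = f_d(t)ᵀQ_j x_d(t) + x_d(t)ᵀQ_j f_d(t). Then ξ_j is differentiable, ξ_j'(t) = β_j(t) + 2k·η_j(t), and consequently η_j(t) = (ξ_j'(t) − β_j(t))/(2k) for all t. -/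
/-!
Since `Q j` is symmetric, `Ψ j' = α j + 2 xdᵀ Q j (∑ i, η i • Q i xd)`, and the relations
`Q j * Q i = 0`, `Q j * Q j = k • Q j` collapse the sum to `k η j Ψ j`. Dividing by `Ψ j > 0`
gives the logarithmic derivative `ξ j' = β j + 2 k η j`, which is solved for `η j` as `k ≠ 0`.
-/

open Matrix

section Calculus

variable {𝕜 : Type*} [NontriviallyNormedField 𝕜] {ι κ : Type*} [Fintype ι]
  {u v : 𝕜 → ι → 𝕜} {u' v' : ι → 𝕜} {t : 𝕜}

theorem HasDerivAt.dotProduct (hu : HasDerivAt u u' t) (hv : HasDerivAt v v' t) :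
    HasDerivAt (fun s => u s ⬝ᵥ v s) (u' ⬝ᵥ v t + u t ⬝ᵥ v') t :=
  (HasDerivAt.fun_sum (u := Finset.univ) fun i _ =>
    (hasDerivAt_pi.1 hu i).mul (hasDerivAt_pi.1 hv i)).congr_deriv Finset.sum_add_distrib

theorem HasDerivAt.mulVec (M : Matrix κ ι 𝕜) (hv : HasDerivAt v v' t) :
    HasDerivAt (fun s => M *ᵥ v s) (M *ᵥ v') t :=
  hasDerivAt_pi.2 fun i =>
    ((hasDerivAt_const t (M i)).dotProduct hv).congr_deriv (by rw [zero_dotProduct, zero_add]; rfl)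

end Calculus

theorem Matrix.mulVec_sum_smul_mulVec {ι n R : Type*} [Fintype ι] [Fintype n] [CommRing R]
    (Q : ι → Matrix n n R) {k : R} {j : ι} (hQ : ∀ i, i ≠ j → Q j * Q i = 0)
    (hQj : Q j * Q j = k • Q j) (c : ι → R) (x : n → R) :
    Q j *ᵥ ∑ i, c i • Q i *ᵥ x = (c j * k) • Q j *ᵥ x := by
  have hvanish : ∀ i ∈ Finset.univ, i ≠ j → Q j *ᵥ (c i • Q i *ᵥ x) = 0 := fun i _ hi => by
    rw [mulVec_smul, mulVec_mulVec, hQ i hi, zero_mulVec, smul_zero]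
  rw [mulVec_sum, Finset.sum_eq_single j hvanish (by simp), mulVec_smul, mulVec_mulVec, hQj,
    smul_mulVec, smul_smul]

theorem hasDerivAt_dotProduct_mulVec_self_of_annihilating {ι n : Type*} [Fintype ι] [Fintype n]
    (Q : ι → Matrix n n ℝ) {k : ℝ} {j : ι} (hsym : (Q j)ᵀ = Q j)
    (hQ : ∀ i, i ≠ j → Q j * Q i = 0) (hQj : Q j * Q j = k • Q j)
    {x f : ℝ → n → ℝ} {c : ι → ℝ → ℝ} {t : ℝ}
    (hx : HasDerivAt x (f t + ∑ i, c i t • Q i *ᵥ x t) t) :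
    HasDerivAt (fun s => x s ⬝ᵥ Q j *ᵥ x s)
      (f t ⬝ᵥ Q j *ᵥ x t + x t ⬝ᵥ Q j *ᵥ f t + 2 * k * c j t * (x t ⬝ᵥ Q j *ᵥ x t)) t := by
  refine (hx.dotProduct (hx.mulVec (Q j))).congr_deriv ?_
  have hswap : ∀ v, v ⬝ᵥ Q j *ᵥ x t = x t ⬝ᵥ Q j *ᵥ v := fun v => by
    rw [← dotProduct_transpose_mulVec, hsym]
  rw [hswap (f t + _), hswap (f t), mulVec_add, dotProduct_add,
    mulVec_sum_smul_mulVec Q hQ hQj, dotProduct_smul, smul_eq_mul]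
  ring

theorem log_quadratic_form_dynamics_general {n m : ℕ} (k : ℝ)
    (hk : k ≠ 0)
    (Q : Fin m → Matrix (Fin n) (Fin n) ℝ)
    (hsym : ∀ i, (Q i)ᵀ = Q i)
    (horth : ∀ i j, i ≠ j → Q i * Q j = 0)
    (hidem : ∀ i, Q i * Q i = k • Q i)
    (xd fd : ℝ → Fin n → ℝ) (η : Fin m → ℝ → ℝ)
    (hxd : Differentiable ℝ xd)
    (hode : ∀ t : ℝ, deriv xd t = fd t + ∑ i, η i t • (Q i).mulVec (xd t))
    (Ψ α : Fin m → ℝ → ℝ)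
    (hΨ : ∀ j t, Ψ j t = xd t ⬝ᵥ (Q j).mulVec (xd t))
    (hα : ∀ j t, α j t = fd t ⬝ᵥ (Q j).mulVec (xd t) + xd t ⬝ᵥ (Q j).mulVec (fd t))
    (hpos : ∀ j t, 0 < Ψ j t)
    (ξ β : Fin m → ℝ → ℝ)
    (hξ : ∀ j t, ξ j t = Real.log (Ψ j t))
    (hβ : ∀ j t, β j t = α j t / Ψ j t) :
    ∀ j, Differentiable ℝ (ξ j) ∧
      (∀ t : ℝ, deriv (ξ j) t = β j t + 2 * k * η j t) ∧
      (∀ t : ℝ, η j t = (deriv (ξ j) t - β j t) / (2 * k)) := by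
  intro j
  have hΨ' : ∀ t, HasDerivAt (Ψ j) (α j t + 2 * k * η j t * Ψ j t) t := fun t => by
    have hx : HasDerivAt xd _ t := hode t ▸ (hxd t).hasDerivAt
    rw [funext (hΨ j), hα]
    exact hasDerivAt_dotProduct_mulVec_self_of_annihilating Q (hsym j)
      (fun i hi => horth j i hi.symm) (hidem j) hx
  have hξ' : ∀ t, HasDerivAt (ξ j) (β j t + 2 * k * η j t) t := fun t => by
    rw [funext (hξ j), hβ]
    convert (hΨ' t).log (hpos j t).ne' using 1
    field_simp [(hpos j t).ne']
  refine ⟨fun t => (hξ' t).differentiableAt, fun t => (hξ' t).deriv, fun t => ?_⟩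
  rw [(hξ' t).deriv]
  field_simp
  ring

/-- Under the hypotheses of Statement 2, if additionally `k ≠ 0` and
`Ψ_j > 0` everywhere, then `ξ_j = ln Ψ_j` is differentiable with
`ξ_j' = β_j + 2 k η_j` where `β_j = α_j / Ψ_j`, and hence
`η_j = (ξ_j' - β_j) / (2k)`. -/
theorem log_quadratic_form_dynamics {n m : ℕ} (hn : 1 ≤ n) (hm : 1 ≤ m) (k : ℝ)
    (hk : k ≠ 0)
    (Q : Fin m → Matrix (Fin n) (Fin n) ℝ)
    (hsym : ∀ i, (Q i)ᵀ = Q i)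
    (horth : ∀ i j, i ≠ j → Q i * Q j = 0)
    (hidem : ∀ i, Q i * Q i = k • Q i)
    (xd fd : ℝ → Fin n → ℝ) (η : Fin m → ℝ → ℝ)
    (hxd : Differentiable ℝ xd)
    (hode : ∀ t : ℝ, deriv xd t = fd t + ∑ i, η i t • (Q i).mulVec (xd t))
    (Ψ α : Fin m → ℝ → ℝ)
    (hΨ : ∀ j t, Ψ j t = xd t ⬝ᵥ (Q j).mulVec (xd t))
    (hα : ∀ j t, α j t = fd t ⬝ᵥ (Q j).mulVec (xd t) + xd t ⬝ᵥ (Q j).mulVec (fd t))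
    (hpos : ∀ j t, 0 < Ψ j t)
    (ξ β : Fin m → ℝ → ℝ)
    (hξ : ∀ j t, ξ j t = Real.log (Ψ j t))
    (hβ : ∀ j t, β j t = α j t / Ψ j t) :
    ∀ j, Differentiable ℝ (ξ j) ∧
      (∀ t : ℝ, deriv (ξ j) t = β j t + 2 * k * η j t) ∧
      (∀ t : ℝ, η j t = (deriv (ξ j) t - β j t) / (2 * k)) :=
  log_quadratic_form_dynamics_general k hk Q hsym horth hidem xd fd η hxd hode Ψ α hΨ hα hpos ξ β hξ
    hβ
end

section
/- Let γ > 0, ω > 0, c > 0, and let φ : [0,∞) → ℝ be continuous with ∫₀ᵗ φ(s)² ds ≥ c·t for all t ≥ 0. Set v = ω², q(t) = φ(t)·v, and let v̂ : [0,∞) → ℝ be differentiable with v̂'(t) = γ·φ(t)·(q(t) − φ(t)·v̂(t)). Then the frequency estimate ω̂(t) = √|v̂(t)| satisfies |ω̂(t) − ω| ≤ (|v̂(0) − ω²|/ω)·exp(−γ·c·t) for all t ≥ 0; in particular ω̂(t) = ω + ε(t) with ε exponentially decaying. -/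
/-!
The parameter error `e = v̂ - ω²` obeys the scalar linear equation `e' = -γ φ² e`, so
`e(t) = e(0) · exp (-γ ∫₀ᵗ φ²)`, and persistent excitation turns this into the decay rate
`exp (-γ c t)`. Finally `|√|x| - ω| · ω ≤ |x - ω²|`, because `|√y - ω| (√y + ω) = |y - ω²|`.
-/

open Real

theorem abs_sqrt_sub_mul_le {y ω : ℝ} (hy : 0 ≤ y) (hω : 0 ≤ ω) :
    |√y - ω| * ω ≤ |y - ω ^ 2| := by
  have hfactor : |√y - ω| * (√y + ω) = |y - ω ^ 2| := by
    rw [← abs_of_nonneg (by positivity : 0 ≤ √y + ω), ← abs_mul]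
    congr 1
    nlinarith [sq_sqrt hy]
  calc |√y - ω| * ω ≤ |√y - ω| * (√y + ω) := by
        gcongr; exact le_add_of_nonneg_left (sqrt_nonneg y)
    _ = |y - ω ^ 2| := hfactor

theorem abs_sqrt_abs_sub_mul_le (x : ℝ) {ω : ℝ} (hω : 0 ≤ ω) :
    |√|x| - ω| * ω ≤ |x - ω ^ 2| :=
  calc |√|x| - ω| * ω ≤ |(|x| - ω ^ 2)| := abs_sqrt_sub_mul_le (abs_nonneg x) hω
    _ = |(|x| - |ω ^ 2|)| := by rw [abs_of_nonneg (sq_nonneg ω)]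
    _ ≤ |x - ω ^ 2| := abs_abs_sub_abs_le_abs_sub x (ω ^ 2)

section LinearODE

variable {p x : ℝ → ℝ}

theorem eq_mul_exp_neg_integral_of_hasDerivAt (hp : Continuous p)
    (hx : ∀ t ≥ 0, HasDerivAt x (-p t * x t) t) {t : ℝ} (ht : 0 ≤ t) :
    x t = x 0 * exp (-∫ s in 0..t, p s) := by
  set P : ℝ → ℝ := fun t => ∫ s in 0..t, p s
  -- `x · exp P` is a first integral of the equation.
  have hderiv : ∀ s ≥ 0, HasDerivAt (fun s => x s * exp (P s)) 0 s := by
    intro s hs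
    have hP : HasDerivAt P (p s) s := (hp.integral_hasStrictDerivAt 0 s).hasDerivAt
    exact ((hx s hs).mul hP.exp).congr_deriv (by ring)
  have hconst : x t * exp (P t) = x 0 * exp (P 0) :=
    constant_of_has_deriv_right_zero (a := 0) (b := t)
      (fun s hs => (hderiv s hs.1).continuousAt.continuousWithinAt)
      (fun s hs => (hderiv s hs.1).hasDerivWithinAt) t ⟨ht, le_rfl⟩
  have hP0 : P 0 = 0 := intervalIntegral.integral_same
  rw [hP0, exp_zero, mul_one] at hconst
  rw [exp_neg, ← hconst, mul_inv_cancel_right₀ (exp_pos _).ne']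

theorem abs_le_abs_mul_exp_of_hasDerivAt {k : ℝ} (hp : Continuous p)
    (hpk : ∀ t ≥ 0, k * t ≤ ∫ s in 0..t, p s)
    (hx : ∀ t ≥ 0, HasDerivAt x (-p t * x t) t) {t : ℝ} (ht : 0 ≤ t) :
    |x t| ≤ |x 0| * exp (-k * t) := by
  rw [eq_mul_exp_neg_integral_of_hasDerivAt hp hx ht, abs_mul, abs_of_pos (exp_pos _)]
  gcongr
  linarith [hpk t ht]

end LinearODE

theorem frequency_estimate_exponential_general (γ ω c : ℝ) (hγ : 0 < γ) (hω : 0 < ω)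
    (φ : ℝ → ℝ) (hφ : Continuous φ)
    (hPE : ∀ t ≥ (0:ℝ), c * t ≤ ∫ s in (0:ℝ)..t, (φ s) ^ 2)
    (v : ℝ) (hv : v = ω ^ 2)
    (q : ℝ → ℝ) (hq : ∀ t : ℝ, q t = φ t * v)
    (vhat : ℝ → ℝ)
    (hode : ∀ t ≥ (0:ℝ), HasDerivAt vhat (γ * φ t * (q t - φ t * vhat t)) t)
    (ωhat : ℝ → ℝ) (hωhat : ∀ t : ℝ, ωhat t = Real.sqrt |vhat t|) :
    ∀ t ≥ (0:ℝ), |ωhat t - ω| ≤ (|vhat 0 - ω ^ 2| / ω) * Real.exp (-γ * c * t) := by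
  intro t ht
  have herror_ode : ∀ s ≥ (0:ℝ),
      HasDerivAt (fun s => vhat s - ω ^ 2) (-(γ * φ s ^ 2) * (vhat s - ω ^ 2)) s := by
    intro s hs
    exact ((hode s hs).sub_const (ω ^ 2)).congr_deriv (by rw [hq, hv]; ring)
  have hexcitation : ∀ s ≥ (0:ℝ), (γ * c) * s ≤ ∫ r in (0:ℝ)..s, γ * φ r ^ 2 := by
    intro s hs
    rw [intervalIntegral.integral_const_mul, mul_assoc]
    exact mul_le_mul_of_nonneg_left (hPE s hs) hγ.le
  have hdecay := abs_le_abs_mul_exp_of_hasDerivAt (by fun_prop) hexcitation herror_ode ht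
  rw [div_mul_eq_mul_div, le_div_iff₀ hω, hωhat, show -γ * c * t = -(γ * c) * t by ring]
  exact (abs_sqrt_abs_sub_mul_le (vhat t) hω.le).trans hdecay

/-- With a persistently exciting regressor (`∫₀ᵗ φ² ≥ c t`), the
gradient estimator of `v = ω²` yields a frequency estimate `ω̂ = √|v̂|` with
exponentially decaying error: `|ω̂(t) - ω| ≤ (|v̂(0) - ω²|/ω) exp(-γ c t)`. -/
theorem frequency_estimate_exponential (γ ω c : ℝ) (hγ : 0 < γ) (hω : 0 < ω)
    (hc : 0 < c)
    (φ : ℝ → ℝ) (hφ : Continuous φ)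
    (hPE : ∀ t ≥ (0:ℝ), c * t ≤ ∫ s in (0:ℝ)..t, (φ s) ^ 2)
    (v : ℝ) (hv : v = ω ^ 2)
    (q : ℝ → ℝ) (hq : ∀ t : ℝ, q t = φ t * v)
    (vhat : ℝ → ℝ)
    (hode : ∀ t ≥ (0:ℝ), HasDerivAt vhat (γ * φ t * (q t - φ t * vhat t)) t)
    (ωhat : ℝ → ℝ) (hωhat : ∀ t : ℝ, ωhat t = Real.sqrt |vhat t|) :
    ∀ t ≥ (0:ℝ), |ωhat t - ω| ≤ (|vhat 0 - ω ^ 2| / ω) * Real.exp (-γ * c * t) :=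
  frequency_estimate_exponential_general γ ω c hγ hω φ hφ hPE v hv q hq vhat hode ωhat hωhat
end

section
/- Let m ≥ 1, λ > 0, let Φ : [0,∞) → ℝᵐ be continuous, let 𝒜 ∈ ℝᵐ, and define the scalar output 𝒴(t) = Φ(t)ᵀ𝒜. Let Y : [0,∞) → ℝᵐ and Ω : [0,∞) → ℝ^{m×m} be differentiable and satisfy Y'(t) = −λ·Y(t) + λ·Φ(t)·𝒴(t), Ω'(t) = −λ·Ω(t) + λ·Φ(t)·Φ(t)ᵀ, with Y(0) = 0 and Ω(0) = 0. Then Y(t) = Ω(t)·𝒜 for all t ≥ 0, and consequently adj(Ω(t))·Y(t) = det(Ω(t))·𝒜 for all t ≥ 0, where adj denotes the adjugate matrix. -/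
open Matrix

/-!
Both `Y` and `Ω *ᵥ 𝒜` solve the same linear ODE `x' = -λx + λ𝒴Φ` (using `ΦΦᵀ𝒜 = (Φᵀ𝒜)Φ = 𝒴Φ`)
with the same initial value `0`, so their difference `e` satisfies `e' = -λe`, `e(0) = 0`; then
`exp(λs)·e(s)` has zero derivative and `e ≡ 0`. The second identity is `adj(Ω)Ω = det(Ω)·I`.
-/

theorem eq_zero_of_hasDerivAt_smul_self {E : Type*} [NormedAddCommGroup E] [NormedSpace ℝ E]
    {f : ℝ → E} {c a : ℝ} (hf : ∀ s ≥ a, HasDerivAt f (c • f s) s) (ha : f a = 0) :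
    ∀ t ≥ a, f t = 0 := by
  intro t ht
  set g : ℝ → E := fun s => Real.exp (-c * s) • f s
  have hg : ∀ s ≥ a, HasDerivAt g 0 s := by
    intro s hs
    have hexp : HasDerivAt (fun u => Real.exp (-c * u)) (Real.exp (-c * s) * -c) s := by
      simpa using ((hasDerivAt_id s).const_mul (-c)).exp
    refine (hexp.fun_smul (hf s hs)).congr_deriv ?_
    rw [smul_smul, ← add_smul, mul_neg, add_neg_cancel, zero_smul]
  have hconst : g t = g a :=
    constant_of_has_deriv_right_zero (fun s hs => (hg s hs.1).continuousAt.continuousWithinAt)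
      (fun s hs => (hg s hs.1).hasDerivWithinAt) t ⟨ht, le_rfl⟩
  simpa [g, ha, Real.exp_ne_zero] using hconst

theorem hasDerivAt_mulVec_of_hasDerivAt_apply {𝕜 n o : Type*} [NontriviallyNormedField 𝕜]
    [Fintype o] {M : 𝕜 → Matrix n o 𝕜} {M' : Matrix n o 𝕜} {t : 𝕜}
    (hM : ∀ i j, HasDerivAt (fun s => M s i j) (M' i j) t) (v : o → 𝕜) :
    HasDerivAt (fun s => M s *ᵥ v) (M' *ᵥ v) t :=
  hasDerivAt_pi.2 fun i => HasDerivAt.fun_sum fun j _ => (hM i j).mul_const (v j)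

theorem vecMulVec_self_mulVec {n R : Type*} [Fintype n] [CommSemiring R] (u v : n → R) :
    vecMulVec u u *ᵥ v = (u ⬝ᵥ v) • u := by
  rw [vecMulVec_mulVec, op_smul_eq_smul]

theorem drem_extension_mixing_general {m : ℕ} (lam : ℝ)
    (Φ : ℝ → Fin m → ℝ)
    (A : Fin m → ℝ)
    (calY : ℝ → ℝ) (hcalY : ∀ t : ℝ, calY t = Φ t ⬝ᵥ A)
    (Y : ℝ → Fin m → ℝ) (Ω : ℝ → Matrix (Fin m) (Fin m) ℝ)
    (hY : ∀ t ≥ (0:ℝ), HasDerivAt Y (-lam • Y t + (lam * calY t) • Φ t) t)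
    (hΩ : ∀ i j, ∀ t ≥ (0:ℝ),
      HasDerivAt (fun s => Ω s i j) (-lam * Ω t i j + lam * (Φ t i * Φ t j)) t)
    (hY0 : Y 0 = 0) (hΩ0 : Ω 0 = 0) :
    ∀ t ≥ (0:ℝ), Y t = (Ω t).mulVec A ∧
      (Ω t).adjugate.mulVec (Y t) = (Ω t).det • A := by
  have hΩA : ∀ s ≥ (0:ℝ),
      HasDerivAt (fun s => Ω s *ᵥ A) (-lam • (Ω s *ᵥ A) + (lam * calY s) • Φ s) s := by
    intro s hs
    convert hasDerivAt_mulVec_of_hasDerivAt_apply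
      (M' := -lam • Ω s + lam • vecMulVec (Φ s) (Φ s)) (fun i j => hΩ i j s hs) A using 1
    rw [add_mulVec, smul_mulVec, smul_mulVec, vecMulVec_self_mulVec, hcalY, smul_smul]
  have herr : ∀ s ≥ (0:ℝ), HasDerivAt (fun s => Y s - Ω s *ᵥ A) (-lam • (Y s - Ω s *ᵥ A)) s :=
    fun s hs => ((hY s hs).sub (hΩA s hs)).congr_deriv (by module)
  intro t ht
  have hYt : Y t = Ω t *ᵥ A :=
    sub_eq_zero.1 (eq_zero_of_hasDerivAt_smul_self herr (by simp [hY0, hΩ0]) t ht)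
  refine ⟨hYt, ?_⟩
  rw [hYt, mulVec_mulVec, adjugate_mul, smul_mulVec, one_mulVec]

/-- DREM construction: filtering the regression `𝒴 = Φᵀ𝒜` through the
stable first-order filters `Y' = -λY + λΦ𝒴`, `Ω' = -λΩ + λΦΦᵀ` with zero initial
conditions yields `Y(t) = Ω(t)𝒜`, and hence, multiplying by the adjugate,
`adj(Ω(t))·Y(t) = det(Ω(t))·𝒜` for all `t ≥ 0`. -/
theorem drem_extension_mixing {m : ℕ} (hm : 1 ≤ m) (lam : ℝ) (hlam : 0 < lam)
    (Φ : ℝ → Fin m → ℝ) (hΦ : Continuous Φ)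
    (A : Fin m → ℝ)
    (calY : ℝ → ℝ) (hcalY : ∀ t : ℝ, calY t = Φ t ⬝ᵥ A)
    (Y : ℝ → Fin m → ℝ) (Ω : ℝ → Matrix (Fin m) (Fin m) ℝ)
    (hY : ∀ t ≥ (0:ℝ), HasDerivAt Y (-lam • Y t + (lam * calY t) • Φ t) t)
    (hΩ : ∀ i j, ∀ t ≥ (0:ℝ),
      HasDerivAt (fun s => Ω s i j) (-lam * Ω t i j + lam * (Φ t i * Φ t j)) t)
    (hY0 : Y 0 = 0) (hΩ0 : Ω 0 = 0) :
    ∀ t ≥ (0:ℝ), Y t = (Ω t).mulVec A ∧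
      (Ω t).adjugate.mulVec (Y t) = (Ω t).det • A :=
  drem_extension_mixing_general lam Φ A calY hcalY Y Ω hY hΩ hY0 hΩ0
end

section
/- Let n ≥ 1, d ≥ 0, let M : ℝ → ℝ^{n×n} and b : ℝ → ℝⁿ be continuous with M bounded, let x, ξ : ℝ → ℝⁿ be differentiable with x'(t) = M(t)x(t) + b(t), ξ'(t) = M(t)ξ(t) + b(t), ξ(0) = 0, and let Φ : ℝ → ℝ^{n×n} be differentiable with Φ'(t) = M(t)Φ(t), Φ(0) = Iₙ. Define the delayed residual g(t) = x(t − d) − ξ(t − d). Then for all t, adj(Φ(t − d))·g(t) = det(Φ(t − d))·x(0); i.e. with R(t) = adj(Φ(t−d))g(t) and P(t) = det(Φ(t−d)), the unknown initial state e₀ = x(0) satisfies the linear regression R(t) = P(t)·e₀. -/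
open Matrix

/-!
The residual `x - ξ` solves the homogeneous equation `e' = M(t) e` with `e(0) = x(0)`, and so does
`t ↦ Φ(t) x(0)`. Since `M` is bounded, `e ↦ M(t) e` is Lipschitz uniformly in `t`, so by uniqueness
of solutions `x(s) - ξ(s) = Φ(s) x(0)` for every `s`. Taking `s = t - d` and multiplying by the
adjugate, `adj(Φ) Φ = det(Φ) · 1` gives the regression.
-/

section LinearODE

variable {ι κ : Type*} [Fintype κ]

theorem norm_mulVec_le_of_abs_le [Fintype ι] {A : Matrix ι κ ℝ} {C : ℝ} (hC0 : 0 ≤ C)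
    (hC : ∀ i j, |A i j| ≤ C) (v : κ → ℝ) :
    ‖A *ᵥ v‖ ≤ Fintype.card κ * C * ‖v‖ := by
  refine pi_norm_le_iff_of_nonneg (by positivity) |>.2 fun i => ?_
  calc ‖(A *ᵥ v) i‖ = ‖∑ j, A i j * v j‖ := rfl
    _ ≤ ∑ j, ‖A i j * v j‖ := norm_sum_le _ _
    _ ≤ ∑ _j : κ, C * ‖v‖ := Finset.sum_le_sum fun j _ => by
        rw [norm_mul, Real.norm_eq_abs]
        exact mul_le_mul (hC i j) (norm_le_pi_norm v j) (norm_nonneg _) hC0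
    _ = Fintype.card κ * C * ‖v‖ := by simp [mul_assoc]

theorem lipschitzWith_mulVec_of_abs_le [Fintype ι] {A : Matrix ι κ ℝ} {C : ℝ} (hC0 : 0 ≤ C)
    (hC : ∀ i j, |A i j| ≤ C) :
    LipschitzWith (Fintype.card κ * C).toNNReal (A *ᵥ ·) :=
  LipschitzWith.of_dist_le_mul fun y z => by
    rw [Real.coe_toNNReal _ (by positivity), dist_eq_norm, dist_eq_norm, ← mulVec_sub]
    exact norm_mulVec_le_of_abs_le hC0 hC _

theorem HasDerivAt.mulVec_const {Φ : ℝ → Matrix ι κ ℝ} {Φ' : Matrix ι κ ℝ} {t : ℝ}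
    (hΦ : ∀ i j, HasDerivAt (fun s => Φ s i j) (Φ' i j) t) (v : κ → ℝ) :
    HasDerivAt (fun s => Φ s *ᵥ v) (Φ' *ᵥ v) t :=
  hasDerivAt_pi.2 fun i => HasDerivAt.fun_sum fun j _ => (hΦ i j).mul_const (v j)

theorem eq_of_hasDerivAt_mulVec {M : ℝ → Matrix κ κ ℝ} (hM : ∃ C, ∀ t i j, |M t i j| ≤ C)
    {u v : ℝ → κ → ℝ} (hu : ∀ t, HasDerivAt u (M t *ᵥ u t) t)
    (hv : ∀ t, HasDerivAt v (M t *ᵥ v t) t) {t₀ : ℝ} (h : u t₀ = v t₀) : u = v := by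
  obtain ⟨C, hC⟩ := hM
  have hlip (t : ℝ) := lipschitzWith_mulVec_of_abs_le (le_max_right C 0)
    fun i j => (hC t i j).trans (le_max_left C 0)
  exact ODE_solution_unique_univ (s := fun _ => Set.univ) (fun t => (hlip t).lipschitzOnWith)
    (fun t => ⟨hu t, trivial⟩) (fun t => ⟨hv t, trivial⟩) h

end LinearODE

theorem delayed_initial_state_regression_general {n : ℕ} (d : ℝ)
    (M : ℝ → Matrix (Fin n) (Fin n) ℝ) (b : ℝ → Fin n → ℝ)
    (hMbdd : ∃ C : ℝ, ∀ (t : ℝ) (i j : Fin n), |M t i j| ≤ C)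
    (x ξ : ℝ → Fin n → ℝ)
    (hx : ∀ t : ℝ, HasDerivAt x ((M t).mulVec (x t) + b t) t)
    (hξ : ∀ t : ℝ, HasDerivAt ξ ((M t).mulVec (ξ t) + b t) t)
    (hξ0 : ξ 0 = 0)
    (Φ : ℝ → Matrix (Fin n) (Fin n) ℝ)
    (hΦ : ∀ (i j : Fin n) (t : ℝ), HasDerivAt (fun s => Φ s i j) ((M t * Φ t) i j) t)
    (hΦ0 : Φ 0 = 1)
    (g : ℝ → Fin n → ℝ) (hg : ∀ t : ℝ, g t = x (t - d) - ξ (t - d))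
    (R : ℝ → Fin n → ℝ) (hR : ∀ t : ℝ, R t = (Φ (t - d)).adjugate.mulVec (g t))
    (P : ℝ → ℝ) (hP : ∀ t : ℝ, P t = (Φ (t - d)).det) :
    (∀ t : ℝ, (Φ (t - d)).adjugate.mulVec (g t) = (Φ (t - d)).det • x 0) ∧
    (∀ t : ℝ, R t = P t • x 0) := by
  have hresidual : ∀ t, HasDerivAt (fun s => x s - ξ s) (M t *ᵥ (x t - ξ t)) t := fun t =>
    ((hx t).sub (hξ t)).congr_deriv (by rw [mulVec_sub]; abel)
  have hfundamental : ∀ t, HasDerivAt (fun s => Φ s *ᵥ x 0) (M t *ᵥ (Φ t *ᵥ x 0)) t := fun t => by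
    simpa [mulVec_mulVec] using HasDerivAt.mulVec_const (fun i j => hΦ i j t) (x 0)
  have hsolution : (fun s => x s - ξ s) = fun s => Φ s *ᵥ x 0 :=
    eq_of_hasDerivAt_mulVec hMbdd hresidual hfundamental (t₀ := 0) (by simp [hξ0, hΦ0])
  have hregression (t : ℝ) : (Φ (t - d)).adjugate *ᵥ g t = (Φ (t - d)).det • x 0 := by
    rw [hg t, congrFun hsolution (t - d), mulVec_mulVec, adjugate_mul, smul_mulVec, one_mulVec]
  exact ⟨hregression, fun t => by rw [hR t, hP t, hregression]⟩

/-- delayed linear regression for the initial state: with `x`, `ξ`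
solutions of `z' = M(t)z + b(t)`, `ξ(0) = 0`, fundamental matrix `Φ`, delay `d ≥ 0`
and delayed residual `g(t) = x(t-d) - ξ(t-d)`, we get
`adj(Φ(t-d))·g(t) = det(Φ(t-d))·x(0)`, i.e. with `R(t) = adj(Φ(t-d))g(t)` and
`P(t) = det(Φ(t-d))`, the unknown `e₀ = x(0)` satisfies `R(t) = P(t)·e₀`. -/
theorem delayed_initial_state_regression {n : ℕ} (hn : 1 ≤ n) (d : ℝ) (hd : 0 ≤ d)
    (M : ℝ → Matrix (Fin n) (Fin n) ℝ) (b : ℝ → Fin n → ℝ)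
    (hMcont : ∀ i j, Continuous fun t => M t i j) (hb : Continuous b)
    (hMbdd : ∃ C : ℝ, ∀ (t : ℝ) (i j : Fin n), |M t i j| ≤ C)
    (x ξ : ℝ → Fin n → ℝ)
    (hx : ∀ t : ℝ, HasDerivAt x ((M t).mulVec (x t) + b t) t)
    (hξ : ∀ t : ℝ, HasDerivAt ξ ((M t).mulVec (ξ t) + b t) t)
    (hξ0 : ξ 0 = 0)
    (Φ : ℝ → Matrix (Fin n) (Fin n) ℝ)
    (hΦ : ∀ (i j : Fin n) (t : ℝ), HasDerivAt (fun s => Φ s i j) ((M t * Φ t) i j) t)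
    (hΦ0 : Φ 0 = 1)
    (g : ℝ → Fin n → ℝ) (hg : ∀ t : ℝ, g t = x (t - d) - ξ (t - d))
    (R : ℝ → Fin n → ℝ) (hR : ∀ t : ℝ, R t = (Φ (t - d)).adjugate.mulVec (g t))
    (P : ℝ → ℝ) (hP : ∀ t : ℝ, P t = (Φ (t - d)).det) :
    (∀ t : ℝ, (Φ (t - d)).adjugate.mulVec (g t) = (Φ (t - d)).det • x 0) ∧
    (∀ t : ℝ, R t = P t • x 0) :=
  delayed_initial_state_regression_general d M b hMbdd x ξ hx hξ hξ0 Φ hΦ hΦ0 g hg R hR P hP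
end

section
/- Let n ≥ 1, γ > 0, let P : [0,∞) → ℝ be continuous, let e₀ ∈ ℝⁿ, and set R(t) = P(t)·e₀. Let ê : [0,∞) → ℝⁿ be differentiable with ê'(t) = −γ·P(t)·(P(t)·ê(t) − R(t)), and let w : [0,∞) → ℝ be differentiable with w'(t) = −γ·P(t)²·w(t), w(0) = 1. Then for all t ≥ 0, ê(t) − w(t)·ê(0) = (1 − w(t))·e₀; consequently, for every t with w(t) < 1, the finite-time estimate ê_FT(t) = (ê(t) − w(t)·ê(0))/(1 − w(t)) equals e₀ exactly. -/
/-!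
The error `g(t) = ê(t) - e₀ - w(t)·(ê(0) - e₀)` solves the same linear equation
`g' = -γP²g` as `ê - e₀` and `w`, and starts at `g(0) = 0`. Since `γP² ≥ 0`, every
component of `g` has a non-increasing square, which therefore stays `0`.
-/

open Set

theorem eq_zero_of_hasDerivAt_eq_neg_mul {f c : ℝ → ℝ} {a : ℝ} (hc : ∀ t ≥ a, 0 ≤ c t)
    (hf : ∀ t ≥ a, HasDerivAt f (-c t * f t) t) (ha : f a = 0) :
    ∀ t ≥ a, f t = 0 := by
  have hsq : ∀ t ≥ a, HasDerivAt (fun s => f s ^ 2) (-(2 * c t * f t ^ 2)) t := fun t ht => by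
    refine ((hf t ht).fun_pow 2).congr_deriv ?_
    push_cast
    ring
  have hanti : AntitoneOn (fun s => f s ^ 2) (Ici a) := by
    refine antitoneOn_of_hasDerivWithinAt_nonpos (convex_Ici a)
      (fun t ht => (hsq t ht).continuousAt.continuousWithinAt)
      (fun t ht => (hsq t (interior_subset ht)).hasDerivWithinAt) fun t ht => ?_
    have hct := hc t (interior_subset ht)
    exact neg_nonpos.mpr (by positivity)
  intro t ht
  have hle : f t ^ 2 ≤ f a ^ 2 := hanti self_mem_Ici ht ht
  simpa [ha] using hle

theorem pi_eq_zero_of_hasDerivAt_eq_neg_smul {ι : Type*} [Fintype ι] {f : ℝ → ι → ℝ}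
    {c : ℝ → ℝ} {a : ℝ} (hc : ∀ t ≥ a, 0 ≤ c t)
    (hf : ∀ t ≥ a, HasDerivAt f (-c t • f t) t) (ha : f a = 0) :
    ∀ t ≥ a, f t = 0 := fun t ht => funext fun i =>
  eq_zero_of_hasDerivAt_eq_neg_mul hc (fun s hs => hasDerivAt_pi.mp (hf s hs) i)
    (congrFun ha i) t ht

theorem finite_time_parameter_estimate_general {n : ℕ} (γ : ℝ) (hγ : 0 < γ)
    (P : ℝ → ℝ)
    (e₀ : Fin n → ℝ)
    (R : ℝ → Fin n → ℝ) (hR : ∀ t : ℝ, R t = P t • e₀)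
    (ehat : ℝ → Fin n → ℝ)
    (hehat : ∀ t ≥ (0:ℝ), HasDerivAt ehat (-(γ * P t) • (P t • ehat t - R t)) t)
    (w : ℝ → ℝ)
    (hw : ∀ t ≥ (0:ℝ), HasDerivAt w (-γ * (P t) ^ 2 * w t) t) (hw0 : w 0 = 1) :
    ∀ t ≥ (0:ℝ), ehat t - w t • ehat 0 = (1 - w t) • e₀ ∧
      (w t < 1 → (1 - w t)⁻¹ • (ehat t - w t • ehat 0) = e₀) := by
  set g : ℝ → Fin n → ℝ := fun t => ehat t - e₀ - w t • (ehat 0 - e₀)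
  have hg : ∀ t ≥ (0:ℝ), HasDerivAt g (-(γ * P t ^ 2) • g t) t := fun t ht => by
    refine (((hehat t ht).sub_const e₀).sub ((hw t ht).smul_const (ehat 0 - e₀))).congr_deriv ?_
    simp only [g, hR]
    module
  have hg0 : g 0 = 0 := by simp [g, hw0]
  intro t ht
  have hmain : ehat t - w t • ehat 0 = (1 - w t) • e₀ := by
    have hgt := pi_eq_zero_of_hasDerivAt_eq_neg_smul (fun s _ => by positivity) hg hg0 t ht
    rw [← sub_eq_zero, ← hgt]
    module
  refine ⟨hmain, fun hlt => ?_⟩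
  rw [hmain, smul_smul, inv_mul_cancel₀ (sub_ne_zero.mpr hlt.ne'), one_smul]

/-- finite-time estimate: for the regression `R(t) = P(t)·e₀` with
continuous scalar regressor `P`, the gradient law `ê' = -γP(Pê - R)` and the
auxiliary signal `w' = -γP²w`, `w(0) = 1` satisfy
`ê(t) - w(t)ê(0) = (1 - w(t))·e₀`; hence whenever `w(t) < 1`, the finite-time
estimate `ê_FT(t) = (ê(t) - w(t)ê(0))/(1 - w(t))` equals `e₀` exactly. -/
theorem finite_time_parameter_estimate {n : ℕ} (hn : 1 ≤ n) (γ : ℝ) (hγ : 0 < γ)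
    (P : ℝ → ℝ) (hP : Continuous P)
    (e₀ : Fin n → ℝ)
    (R : ℝ → Fin n → ℝ) (hR : ∀ t : ℝ, R t = P t • e₀)
    (ehat : ℝ → Fin n → ℝ)
    (hehat : ∀ t ≥ (0:ℝ), HasDerivAt ehat (-(γ * P t) • (P t • ehat t - R t)) t)
    (w : ℝ → ℝ)
    (hw : ∀ t ≥ (0:ℝ), HasDerivAt w (-γ * (P t) ^ 2 * w t) t) (hw0 : w 0 = 1) :
    ∀ t ≥ (0:ℝ), ehat t - w t • ehat 0 = (1 - w t) • e₀ ∧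
      (w t < 1 → (1 - w t)⁻¹ • (ehat t - w t • ehat 0) = e₀) :=
  finite_time_parameter_estimate_general γ hγ P e₀ R hR ehat hehat w hw hw0
end
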